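/- arXiv:1510.03446 — 4 statements merged into one kernel-verified Lean document; each statement's English description precedes it below -/
import Mathlib

section
/- Let A be a left Noetherian ring and M = A⟨f_1,...,f_s⟩_A a centralizing A-subbimodule of A^m with f_i ∈ Cen_A(M), and N = A⟨g_1,...,g_t⟩ a left A-submodule of A^l. Let Syz(M) ⊆ A^s and Syz(N) ⊆ A^t be the syzygy modules of the generating sets. Then the kernel of the left A-module surjection A^{st} → M ⊗_A N, e_{(i,j)} ↦ f_i ⊗ g_j, is generated by the columns of the block matrix [Syz(M) ⊗ I_t | I_s ⊗ Syz(N)], where Syz(M) and Syz(N) denote matrices whose columns generate the respective syzygy modules and ⊗ denotes the Kronecker product. -/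
open scoped TensorProduct

/-- The `A`-submodule of relations defining the tensor product `M ⊗_A N` of an
`(A,A)`-bimodule `M` and a left `A`-module `N` as a quotient of `M ⊗_ℤ N`. -/
noncomputable def tensorRelationsA (A M N : Type*) [Ring A] [AddCommGroup M] [AddCommGroup N]
    [Module A M] [Module Aᵐᵒᵖ M] [SMulCommClass A Aᵐᵒᵖ M] [Module A N] :
    Submodule A (M ⊗[ℤ] N) :=
  Submodule.span A {x | ∃ (m : M) (s : A) (n : N),
    x = (MulOpposite.op s • m) ⊗ₜ[ℤ] n - m ⊗ₜ[ℤ] (s • n)}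

/-- The tensor product `M ⊗_A N` of an `(A,A)`-bimodule `M` and a left `A`-module `N`,
as a left `A`-module via the left action on `M`. -/
noncomputable def TensorOverA (A M N : Type*) [Ring A] [AddCommGroup M] [AddCommGroup N]
    [Module A M] [Module Aᵐᵒᵖ M] [SMulCommClass A Aᵐᵒᵖ M] [Module A N] : Type _ :=
  (M ⊗[ℤ] N) ⧸ tensorRelationsA A M N

noncomputable instance (A M N : Type*) [Ring A] [AddCommGroup M] [AddCommGroup N]
    [Module A M] [Module Aᵐᵒᵖ M] [SMulCommClass A Aᵐᵒᵖ M] [Module A N] :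
    AddCommGroup (TensorOverA A M N) := Submodule.Quotient.addCommGroup _

noncomputable instance (A M N : Type*) [Ring A] [AddCommGroup M] [AddCommGroup N]
    [Module A M] [Module Aᵐᵒᵖ M] [SMulCommClass A Aᵐᵒᵖ M] [Module A N] :
    Module A (TensorOverA A M N) := Submodule.Quotient.module _

/-- The elementary tensor `m ⊗ n` in `M ⊗_A N`. -/
noncomputable def tensorOverA {A M N : Type*} [Ring A] [AddCommGroup M] [AddCommGroup N]
    [Module A M] [Module Aᵐᵒᵖ M] [SMulCommClass A Aᵐᵒᵖ M] [Module A N]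
    (m : M) (n : N) : TensorOverA A M N :=
  Submodule.Quotient.mk (m ⊗ₜ[ℤ] n)

/-!
Factor `e_(i,j) ↦ f_i ⊗ g_j` as `A^(s×t) → M^t → M ⊗_A N`: the first map applies `f` to each
column, the second sends `w` to `∑ⱼ wⱼ ⊗ gⱼ`. The kernel of the first map is spanned by the
columns of `Syz(M) ⊗ I_t`. By right exactness of `M ⊗_A -` on the presentation
`Syz(N) → A^t → N → 0`, the kernel of the second is spanned by the vectors `(x·zⱼ)ⱼ` with
`x ∈ M` and `z ∈ Syz(N)`; since the `fᵢ` generate `M` and are central, the vectors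
`(zₖⱼ fᵢ)ⱼ` already span it, and these are the images of the columns of `I_s ⊗ Syz(N)`.
Right exactness is proved by writing down the inverse `x ⊗ g(d) ↦ [x·d]` of the induced map
`M^t / (M·Syz(N)) → M ⊗_A N`.
-/

open MulOpposite Submodule

section Columns

variable {A P ι κ K : Type*} [Ring A] [AddCommGroup P] [Module A P]

def onColumns (F : (ι → A) →ₗ[A] P) : (ι × κ → A) →ₗ[A] κ → P :=
  LinearMap.pi fun j => F ∘ₗ LinearMap.funLeft A A (·, j)

@[simp] theorem onColumns_apply (F : (ι → A) →ₗ[A] P) (c : ι × κ → A) (j : κ) :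
    onColumns F c j = F fun i => c (i, j) := rfl

def insertColumn [DecidableEq κ] (j : κ) : (ι → A) →ₗ[A] ι × κ → A :=
  LinearMap.pi fun q => if q.2 = j then LinearMap.proj q.1 else 0

theorem insertColumn_apply [DecidableEq κ] (j : κ) (w : ι → A) :
    insertColumn j w = fun q => if q.2 = j then w q.1 else 0 := by
  ext q
  by_cases h : q.2 = j <;> simp [insertColumn, h]

theorem sum_insertColumn [Fintype κ] [DecidableEq κ] (c : ι × κ → A) :
    ∑ j, insertColumn j (fun i => c (i, j)) = c := by
  ext q
  simp [insertColumn_apply]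

theorem ker_onColumns [Fintype κ] [DecidableEq κ] {F : (ι → A) →ₗ[A] P} {z : K → ι → A}
    (hz : span A (Set.range z) = LinearMap.ker F) :
    LinearMap.ker (onColumns (κ := κ) F) = span A (Set.range fun kj : K × κ =>
      fun q : ι × κ => if q.2 = kj.2 then z kj.1 q.1 else 0) := by
  refine le_antisymm (fun c hc => ?_) (span_le.mpr ?_)
  · rw [← sum_insertColumn c]
    refine sum_mem fun j _ => ?_
    have hcol : (fun i => c (i, j)) ∈ span A (Set.range z) := by
      rw [hz, LinearMap.mem_ker, ← onColumns_apply, LinearMap.mem_ker.mp hc, Pi.zero_apply]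
    refine (map_span_le _ _ _).mpr ?_ (mem_map_of_mem hcol)
    rintro _ ⟨k, rfl⟩
    rw [insertColumn_apply]
    exact subset_span ⟨(k, j), rfl⟩
  · rintro _ ⟨⟨k, j⟩, rfl⟩
    have hk : F (z k) = 0 := by
      rw [← LinearMap.mem_ker, ← hz]
      exact subset_span (Set.mem_range_self k)
    ext j'
    by_cases h : j' = j <;> simp [h, hk, ← Pi.zero_def]

end Columns

namespace TensorOverA

variable {A M N : Type*} [Ring A] [AddCommGroup M] [AddCommGroup N]
  [Module A M] [Module Aᵐᵒᵖ M] [SMulCommClass A Aᵐᵒᵖ M] [Module A N]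

noncomputable def tmulLeft (n : N) : M →ₗ[A] TensorOverA A M N :=
  (tensorRelationsA A M N).mkQ ∘ₗ (TensorProduct.AlgebraTensorModule.mk ℤ A M N).flip n

noncomputable def tmulRight (x : M) : N →+ TensorOverA A M N :=
  (tensorRelationsA A M N).mkQ.toAddMonoidHom.comp (TensorProduct.mk ℤ M N x).toAddMonoidHom

@[simp] theorem tmulLeft_apply (n : N) (x : M) : tmulLeft (A := A) n x = tensorOverA x n := rfl

@[simp] theorem tmulRight_apply (x : M) (n : N) : tmulRight (A := A) x n = tensorOverA x n := rfl

theorem tensorOverA_op_smul (a : A) (x : M) (n : N) :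
    tensorOverA (A := A) (op a • x) n = tensorOverA x (a • n) :=
  (Submodule.Quotient.eq _).mpr (subset_span ⟨x, a, n, rfl⟩)

section Lift

variable {Q : Type*} [AddCommGroup Q] [Module A Q]

noncomputable def lift (B : M →ₗ[A] N →ₗ[ℤ] Q)
    (hB : ∀ (a : A) x n, B (op a • x) n = B x (a • n)) : TensorOverA A M N →ₗ[A] Q :=
  (tensorRelationsA A M N).liftQ (TensorProduct.AlgebraTensorModule.lift B) <| by
    rw [tensorRelationsA, span_le]
    rintro _ ⟨x, a, n, rfl⟩
    simp [hB]

@[simp] theorem lift_tensorOverA (B : M →ₗ[A] N →ₗ[ℤ] Q) (hB) (x : M) (n : N) :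
    lift B hB (tensorOverA x n) = B x n := rfl

end Lift

variable {ι : Type*}

/-- `x ↦ x·d`, the image of `x ⊗ d` under `M ⊗_A A^ι ≅ M^ι`. -/
def opSmulVec (d : ι → A) : M →ₗ[A] ι → M where
  toFun x j := op (d j) • x
  map_add' x y := funext fun _ => smul_add _ x y
  map_smul' a x := funext fun j => (smul_comm a (op (d j)) x).symm

@[simp] theorem opSmulVec_apply (d : ι → A) (x : M) (j : ι) :
    opSmulVec d x j = op (d j) • x := rfl

@[simp] theorem opSmulVec_zero : opSmulVec (M := M) (0 : ι → A) = 0 := by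
  ext x j
  simp

theorem opSmulVec_add (d d' : ι → A) :
    opSmulVec (M := M) (d + d') = opSmulVec d + opSmulVec d' := by
  ext x j
  simp [add_smul]

theorem opSmulVec_smul (a : A) (d : ι → A) (x : M) :
    opSmulVec (a • d) x = opSmulVec d (op a • x) := by
  ext j
  simp [mul_smul]

theorem opSmulVec_single [DecidableEq ι] (j : ι) (x : M) :
    opSmulVec (Pi.single j (1 : A)) x = Pi.single j x := by
  ext j'
  rcases eq_or_ne j' j with rfl | h <;> simp [*]

/-- The image of `M ⊗_A K` in `M ⊗_A A^ι ≅ M^ι`. -/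
def opSmulSpan (K : Submodule A (ι → A)) : Submodule A (ι → M) :=
  ⨆ d ∈ K, LinearMap.range (opSmulVec d)

theorem opSmulVec_mem_opSmulSpan {K : Submodule A (ι → A)} {d : ι → A} (hd : d ∈ K) (x : M) :
    opSmulVec d x ∈ opSmulSpan K :=
  le_iSup₂ (f := fun d _ => LinearMap.range (opSmulVec (M := M) d)) d hd
    (LinearMap.mem_range_self _ x)

theorem opSmulSpan_span {κ P : Type*} {f : κ → M} (hf : span A (Set.range f) = ⊤)
    (z : P → ι → A) :
    opSmulSpan (span A (Set.range z)) =
      span A (Set.range fun ik : κ × P => opSmulVec (z ik.2) (f ik.1)) := by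
  refine le_antisymm (iSup₂_le fun d hd => ?_) (span_le.mpr ?_)
  · induction hd using span_induction with
    | mem d hd =>
      obtain ⟨k, rfl⟩ := hd
      rw [LinearMap.range_eq_map, ← hf, map_span, span_le]
      rintro _ ⟨_, ⟨i, rfl⟩, rfl⟩
      exact subset_span ⟨(i, k), rfl⟩
    | zero => simp
    | add d d' _ _ hd hd' =>
      rintro _ ⟨x, rfl⟩
      rw [opSmulVec_add, LinearMap.add_apply]
      exact add_mem (hd ⟨x, rfl⟩) (hd' ⟨x, rfl⟩)
    | smul a d _ hd =>
      rintro _ ⟨x, rfl⟩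
      rw [opSmulVec_smul]
      exact hd ⟨_, rfl⟩
  · rintro _ ⟨⟨i, k⟩, rfl⟩
    exact opSmulVec_mem_opSmulSpan (subset_span (Set.mem_range_self k)) _

theorem map_onColumns_span {κ P : Type*} [Fintype κ] [DecidableEq κ] {f : κ → M}
    (hcen : ∀ i, ∀ a : A, op a • f i = a • f i) (z : P → ι → A) :
    map (onColumns (Fintype.linearCombination A f)) (span A (Set.range fun ik : κ × P =>
        fun q : κ × ι => if q.1 = ik.1 then z ik.2 q.2 else 0)) =
      span A (Set.range fun ik : κ × P => opSmulVec (z ik.2) (f ik.1)) := by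
  rw [map_span, ← Set.range_comp]
  congr with ik j
  simp [Fintype.linearCombination_apply, ite_smul, hcen]

variable [Fintype ι]

noncomputable def tensorCombination (g : ι → N) : (ι → M) →ₗ[A] TensorOverA A M N :=
  ∑ j, tmulLeft (g j) ∘ₗ LinearMap.proj j

theorem tensorCombination_apply (g : ι → N) (w : ι → M) :
    tensorCombination (A := A) g w = ∑ j, tensorOverA (w j) (g j) := by
  simp [tensorCombination]

theorem tensorCombination_single [DecidableEq ι] (g : ι → N) (i : ι) (x : M) :
    tensorCombination (A := A) g (Pi.single i x) = tensorOverA x (g i) := by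
  rw [tensorCombination_apply, Finset.sum_eq_single i (fun j _ hj => by
    rw [Pi.single_eq_of_ne hj, ← tmulLeft_apply, map_zero]) (by simp), Pi.single_eq_same]

theorem tensorCombination_opSmulVec (g : ι → N) (d : ι → A) (x : M) :
    tensorCombination (A := A) g (opSmulVec d x) =
      tensorOverA x (Fintype.linearCombination A g d) := by
  simp only [tensorCombination_apply, opSmulVec_apply, tensorOverA_op_smul,
    Fintype.linearCombination_apply, ← tmulRight_apply x, map_sum]

theorem opSmulSpan_le_ker_tensorCombination (g : ι → N) :
    opSmulSpan (LinearMap.ker (Fintype.linearCombination A g)) ≤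
      LinearMap.ker (tensorCombination (M := M) g) := by
  refine iSup₂_le fun d hd => ?_
  rintro _ ⟨x, rfl⟩
  rw [LinearMap.mem_ker, tensorCombination_opSmulVec, LinearMap.mem_ker.mp hd,
    ← tmulRight_apply, map_zero]

section Inverse

variable {g : ι → N} (hg : Function.Surjective (Fintype.linearCombination A g))

noncomputable def tensorCombinationInvCurried (x : M) :
    N →+ (ι → M) ⧸ opSmulSpan (M := M) (LinearMap.ker (Fintype.linearCombination A g)) :=
  (Fintype.linearCombination A g).toAddMonoidHom.liftOfRightInverse _
    (Function.rightInverse_surjInv hg)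
    ⟨(mkQ _).toAddMonoidHom.comp (AddMonoidHom.mk' (fun d => opSmulVec d x) fun d d' => by
        simp [opSmulVec_add]),
      fun d hd => by simpa using opSmulVec_mem_opSmulSpan hd x⟩

theorem tensorCombinationInvCurried_linearCombination (x : M) (d : ι → A) :
    tensorCombinationInvCurried hg x (Fintype.linearCombination A g d) =
      mkQ _ (opSmulVec d x) :=
  AddMonoidHom.liftOfRightInverse_comp_apply _ _ _ _ d

noncomputable def tensorCombinationInv : TensorOverA A M N →ₗ[A]
    (ι → M) ⧸ opSmulSpan (M := M) (LinearMap.ker (Fintype.linearCombination A g)) :=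
  lift
    { toFun x := (tensorCombinationInvCurried hg x).toIntLinearMap
      map_add' x y := by
        ext n
        obtain ⟨d, rfl⟩ := hg n
        simp [tensorCombinationInvCurried_linearCombination]
      map_smul' a x := by
        ext n
        obtain ⟨d, rfl⟩ := hg n
        simp [tensorCombinationInvCurried_linearCombination] }
    fun a x n => by
      obtain ⟨d, rfl⟩ := hg n
      change tensorCombinationInvCurried hg _ _ = tensorCombinationInvCurried hg x _
      rw [← map_smul, tensorCombinationInvCurried_linearCombination,
        tensorCombinationInvCurried_linearCombination, opSmulVec_smul]

theorem tensorCombinationInv_comp :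
    tensorCombinationInv hg ∘ₗ tensorCombination (M := M) g = mkQ _ := by
  classical
  refine LinearMap.pi_ext fun i x => ?_
  rw [LinearMap.comp_apply, tensorCombination_single, tensorCombinationInv, lift_tensorOverA]
  change tensorCombinationInvCurried hg x (g i) = _
  rw [← one_smul A (g i), ← Fintype.linearCombination_apply_single,
    tensorCombinationInvCurried_linearCombination, opSmulVec_single, mkQ_apply]

end Inverse

theorem ker_tensorCombination {g : ι → N}
    (hg : Function.Surjective (Fintype.linearCombination A g)) :
    LinearMap.ker (tensorCombination (M := M) g) =
      opSmulSpan (LinearMap.ker (Fintype.linearCombination A g)) := by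
  refine le_antisymm ?_ (opSmulSpan_le_ker_tensorCombination g)
  calc LinearMap.ker (tensorCombination g)
      ≤ LinearMap.ker (tensorCombinationInv hg ∘ₗ tensorCombination g) :=
        LinearMap.ker_le_ker_comp _ _
    _ = _ := by rw [tensorCombinationInv_comp, ker_mkQ]

theorem linearCombination_tensorOverA {κ : Type*} [Fintype κ] (f : κ → M) (g : ι → N) :
    Fintype.linearCombination A (fun q : κ × ι => tensorOverA (A := A) (f q.1) (g q.2)) =
      tensorCombination g ∘ₗ onColumns (Fintype.linearCombination A f) := by
  refine LinearMap.ext fun c => ?_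
  rw [Fintype.linearCombination_apply, LinearMap.comp_apply, tensorCombination_apply,
    Fintype.sum_prod_type, Finset.sum_comm]
  refine Finset.sum_congr rfl fun j _ => ?_
  simp only [onColumns_apply, Fintype.linearCombination_apply, ← tmulLeft_apply, map_sum,
    map_smul]

end TensorOverA

theorem syz_of_tensor_eq_span_kronecker_general {A : Type*} [Ring A]
    {M : Type*} [AddCommGroup M] [Module A M] [Module Aᵐᵒᵖ M] [SMulCommClass A Aᵐᵒᵖ M]
    {N : Type*} [AddCommGroup N] [Module A N]
    {s t r p : ℕ}
    (f : Fin s → M) (hcen : ∀ i, ∀ a : A, MulOpposite.op a • f i = a • f i)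
    (hfgen : Submodule.span A (Set.range f) = ⊤)
    (g : Fin t → N) (hggen : Submodule.span A (Set.range g) = ⊤)
    (zM : Fin r → (Fin s → A))
    (hzM : Submodule.span A (Set.range zM) =
      LinearMap.ker (Fintype.linearCombination A f))
    (zN : Fin p → (Fin t → A))
    (hzN : Submodule.span A (Set.range zN) =
      LinearMap.ker (Fintype.linearCombination A g)) :
    LinearMap.ker (Fintype.linearCombination A
        (fun q : Fin s × Fin t => tensorOverA (A := A) (f q.1) (g q.2))) =
      Submodule.span A
        ((Set.range fun kj : Fin r × Fin t =>
            (fun q : Fin s × Fin t => if q.2 = kj.2 then zM kj.1 q.1 else 0)) ∪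
         (Set.range fun ik : Fin s × Fin p =>
            (fun q : Fin s × Fin t => if q.1 = ik.1 then zN ik.2 q.2 else 0))) := by
  have hgsurj : Function.Surjective (Fintype.linearCombination A g) := by
    rw [← LinearMap.range_eq_top, Fintype.range_linearCombination, hggen]
  rw [TensorOverA.linearCombination_tensorOverA, LinearMap.ker_comp,
    TensorOverA.ker_tensorCombination hgsurj, ← hzN, TensorOverA.opSmulSpan_span hfgen,
    ← TensorOverA.map_onColumns_span hcen, comap_map_eq, ker_onColumns hzM, span_union, sup_comm]

/-- Theorem 12 of the paper. Let `A` be a left Noetherian ring,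
`M = A⟨f_1,…,f_s⟩_A` a centralizing `A`-subbimodule of `A^m` with `f_i ∈ Cen_A(M)`,
and `N = A⟨g_1,…,g_t⟩` a left `A`-submodule of `A^l`.  Let `Syz(M) ⊆ A^s` and
`Syz(N) ⊆ A^t` be the syzygy modules of the generating sets, generated by the columns
`zM_1,…,zM_r` resp. `zN_1,…,zN_p` of matrices `Syz(M)`, `Syz(N)`.  Then the kernel of the
left `A`-linear surjection `A^{st} → M ⊗_A N`, `e_{(i,j)} ↦ f_i ⊗ g_j`, is generated by
the columns of the block matrix `[Syz(M) ⊗ I_t | I_s ⊗ Syz(N)]` (Kronecker products). -/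
theorem syz_of_tensor_eq_span_kronecker {A : Type*} [Ring A] [IsNoetherianRing A]
    {M : Type*} [AddCommGroup M] [Module A M] [Module Aᵐᵒᵖ M] [SMulCommClass A Aᵐᵒᵖ M]
    {N : Type*} [AddCommGroup N] [Module A N]
    {m l s t r p : ℕ}
    (ι : M →ₗ[A] (Fin m → A)) (hι : Function.Injective ι)
    (hιr : ∀ (a : A) (x : M), ι (MulOpposite.op a • x) = MulOpposite.op a • ι x)
    (κ : N →ₗ[A] (Fin l → A)) (hκ : Function.Injective κ)
    (f : Fin s → M) (hcen : ∀ i, ∀ a : A, MulOpposite.op a • f i = a • f i)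
    (hfgen : Submodule.span A (Set.range f) = ⊤)
    (g : Fin t → N) (hggen : Submodule.span A (Set.range g) = ⊤)
    (zM : Fin r → (Fin s → A))
    (hzM : Submodule.span A (Set.range zM) =
      LinearMap.ker (Fintype.linearCombination A f))
    (zN : Fin p → (Fin t → A))
    (hzN : Submodule.span A (Set.range zN) =
      LinearMap.ker (Fintype.linearCombination A g)) :
    LinearMap.ker (Fintype.linearCombination A
        (fun q : Fin s × Fin t => tensorOverA (A := A) (f q.1) (g q.2))) =
      Submodule.span A
        ((Set.range fun kj : Fin r × Fin t =>
            (fun q : Fin s × Fin t => if q.2 = kj.2 then zM kj.1 q.1 else 0)) ∪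
         (Set.range fun ik : Fin s × Fin p =>
            (fun q : Fin s × Fin t => if q.1 = ik.1 then zN ik.2 q.2 else 0))) :=
  syz_of_tensor_eq_span_kronecker_general f hcen hfgen g hggen zM hzM zN hzN
end

section
/- Let A be a ring and M a left A-module admitting a short exact sequence 0 → A^s → A^r → M → 0 of left A-modules. Then M is stably free (i.e., M ⊕ A^p ≅ A^q for some p, q) if and only if Ext^1_A(M, A) = 0. -/
/-!
Resolving `M` by the two-term complex `A^s → A^r` computes `Ext¹(M, A)` as the cokernel of
`f^* : Hom(A^r, A) → Hom(A^s, A)`. If `M` is stably free it is projective, so `Ext¹` vanishes.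
Conversely, if `f^*` is onto then each coordinate projection of `A^s` extends along `f`; together
these give a retraction of `f`, so the sequence splits and `A^r ≅ M × A^s`.
-/

open CategoryTheory Limits ZeroObject

universe v

namespace ChainComplex

variable {C : Type*} [Category* C] [HasZeroMorphisms C] [HasZeroObject C]

noncomputable def twoTerm {X₁ X₀ : C} (f : X₁ ⟶ X₀) : ChainComplex C ℕ :=
  of (fun | 0 => X₀ | 1 => X₁ | _ + 2 => 0) (fun | 0 => f | _ + 1 => 0) fun _ => zero_comp

variable {X₁ X₀ : C} (f : X₁ ⟶ X₀)

@[simp]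
lemma twoTerm_d_one_zero : (twoTerm f).d 1 0 = f := by
  simp only [twoTerm]
  exact of_d _ _ 0

lemma isZero_twoTerm_X (n : ℕ) : IsZero ((twoTerm f).X (n + 2)) :=
  isZero_zero C

end ChainComplex

namespace CategoryTheory

variable {C : Type*} [Category* C] [Abelian C]

noncomputable def ProjectiveResolution.ofShortExact {S : ShortComplex C} (hS : S.ShortExact)
    [Projective S.X₁] [Projective S.X₂] : ProjectiveResolution S.X₃ where
  complex := ChainComplex.twoTerm S.f
  projective
    | 0 => inferInstanceAs (Projective S.X₂)
    | 1 => inferInstanceAs (Projective S.X₁)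
    | n + 2 => (ChainComplex.isZero_twoTerm_X S.f n).projective
  π := (ChainComplex.toSingle₀Equiv _ _).symm
    ⟨S.g, by rw [ChainComplex.twoTerm_d_one_zero]; exact S.zero⟩
  quasiIso := ⟨fun n => by
    cases n with
    | zero =>
      rw [ChainComplex.quasiIsoAt₀_iff, ShortComplex.quasiIso_iff_of_zeros']
      · refine (ShortComplex.exact_and_epi_g_iff_of_iso ?_).2 ⟨hS.exact, hS.epi_g⟩
        exact ShortComplex.isoMk (Iso.refl _) (Iso.refl _) (Iso.refl _)
          ((Category.id_comp _).trans
            ((ChainComplex.twoTerm_d_one_zero S.f).symm.trans (Category.comp_id _).symm))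
          ((Category.id_comp _).trans
            ((ChainComplex.toSingle₀Equiv_symm_apply_f_zero (C := ChainComplex.twoTerm S.f)
              S.g _).symm.trans (Category.comp_id _).symm))
      all_goals rfl
    | succ n =>
      rw [quasiIsoAt_iff_exactAt' _ _ (ChainComplex.exactAt_succ_single_obj _ _),
        HomologicalComplex.exactAt_iff' _ (n + 2) (n + 1) n (by simp) (by simp)]
      cases n with
      | zero =>
        rw [ShortComplex.exact_iff_mono _
          ((ChainComplex.isZero_twoTerm_X S.f 0).eq_of_src _ _)]
        show Mono ((ChainComplex.twoTerm S.f).d 1 0)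
        rw [ChainComplex.twoTerm_d_one_zero]
        exact hS.mono_f
      | succ n =>
        exact ShortComplex.exact_of_isZero_X₂ _ (ChainComplex.isZero_twoTerm_X S.f n)⟩

lemma ShortComplex.ShortExact.isZero_Ext_one_iff_forall_exists_comp_eq (R : Type*) [Ring R]
    [Linear R C] [EnoughProjectives C] {S : ShortComplex C} (hS : S.ShortExact)
    [Projective S.X₁] [Projective S.X₂] (Y : C) :
    IsZero (((Ext R C 1).obj (Opposite.op S.X₃)).obj Y) ↔
      ∀ φ : S.X₁ ⟶ Y, ∃ ψ : S.X₂ ⟶ Y, S.f ≫ ψ = φ := by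
  rw [((ProjectiveResolution.ofShortExact hS).isoExt 1 Y).isZero_iff,
    ← HomologicalComplex.exactAt_iff_isZero_homology,
    HomologicalComplex.exactAt_iff' _ 0 1 2 (by simp) (by simp), ShortComplex.moduleCat_exact_iff]
  change (∀ φ : S.X₁ ⟶ Y, _ → ∃ ψ : S.X₂ ⟶ Y, (ChainComplex.twoTerm S.f).d 1 0 ≫ ψ = φ) ↔ _
  simp only [ChainComplex.twoTerm_d_one_zero]
  exact ⟨fun h φ => h φ ((ChainComplex.isZero_twoTerm_X S.f 0).eq_of_src _ _), fun h φ _ => h φ⟩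

end CategoryTheory

lemma LinearMap.exists_leftInverse_of_forall_exists_comp_eq {R M ι : Type*} [Semiring R]
    [AddCommMonoid M] [Module R M] {f : (ι → R) →ₗ[R] M}
    (h : ∀ φ : (ι → R) →ₗ[R] R, ∃ ψ : M →ₗ[R] R, ψ ∘ₗ f = φ) :
    ∃ l : M →ₗ[R] (ι → R), l ∘ₗ f = LinearMap.id := by
  choose ψ hψ using fun i => h (LinearMap.proj i)
  exact ⟨LinearMap.pi ψ, LinearMap.ext fun x => funext fun i => LinearMap.congr_fun (hψ i) x⟩

lemma ModuleCat.isZero_Ext_one_iff_forall_exists_comp_eq (k : Type*) [Ring k] {R : Type v}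
    [Ring R] [Linear k (ModuleCat.{v} R)] {P₁ P₀ M : Type v} [AddCommGroup P₁] [AddCommGroup P₀]
    [AddCommGroup M] [Module R P₁] [Module R P₀] [Module R M] [Module.Projective R P₁]
    [Module.Projective R P₀] {f : P₁ →ₗ[R] P₀} {g : P₀ →ₗ[R] M} (hfg : Function.Exact f g)
    (hf : Function.Injective f) (hg : Function.Surjective g) (Y : ModuleCat.{v} R) :
    IsZero (((Ext k (ModuleCat R) 1).obj (Opposite.op (ModuleCat.of R M))).obj Y) ↔
      ∀ φ : P₁ →ₗ[R] Y, ∃ ψ : P₀ →ₗ[R] Y, ψ ∘ₗ f = φ := by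
  let S := ShortComplex.moduleCatMk f g hfg.linearMap_comp_eq_zero
  have hS : S.ShortExact :=
    .mk' ((ShortComplex.ShortExact.moduleCat_exact_iff_function_exact _).mpr hfg)
      ((ModuleCat.mono_iff_injective _).mpr hf) ((ModuleCat.epi_iff_surjective _).mpr hg)
  have : Projective S.X₁ := inferInstanceAs (Projective (ModuleCat.of R P₁))
  have : Projective S.X₂ := inferInstanceAs (Projective (ModuleCat.of R P₀))
  refine (hS.isZero_Ext_one_iff_forall_exists_comp_eq k Y).trans ⟨fun h φ => ?_, fun h φ => ?_⟩
  · obtain ⟨ψ, hψ⟩ := h (ModuleCat.ofHom φ)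
    exact ⟨ψ.hom, congrArg ModuleCat.Hom.hom hψ⟩
  · obtain ⟨ψ, hψ⟩ := h φ.hom
    exact ⟨ModuleCat.ofHom ψ, ModuleCat.hom_ext hψ⟩

/-- Let `A` be a ring and `M` a left `A`-module admitting a short exact
sequence `0 → A^s → A^r → M → 0` of left `A`-modules.  Then `M` is stably free
(i.e. `M ⊕ A^p ≅ A^q` for some `p, q`) if and only if `Ext¹_A(M, A) = 0`
(the Ext group being computed in the abelian category of left `A`-modules). -/
theorem stablyFree_iff_ext_one_eq_zero {A : Type} [Ring A]
    (M : Type) [AddCommGroup M] [Module A M]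
    {s r : ℕ} (f : (Fin s → A) →ₗ[A] (Fin r → A)) (g : (Fin r → A) →ₗ[A] M)
    (hf : Function.Injective f) (hg : Function.Surjective g)
    (hfg : LinearMap.ker g = LinearMap.range f) :
    (∃ p q : ℕ, Nonempty ((M × (Fin p → A)) ≃ₗ[A] (Fin q → A))) ↔
      Subsingleton (((Ext ℤ (ModuleCat A) 1).obj
        (Opposite.op (ModuleCat.of A M))).obj (ModuleCat.of A A)) := by
  have hexact : Function.Exact f g := LinearMap.exact_iff.mpr hfg
  rw [← ModuleCat.isZero_iff_subsingleton]
  constructor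
  · rintro ⟨p, q, ⟨e⟩⟩
    have : Module.Free A (M × (Fin p → A)) := .of_equiv e.symm
    have : Module.IsStablyFree A M := .of_free_prod A M (Fin p → A)
    exact isZero_Ext_succ_of_projective (ModuleCat.of A M) _ 0
  · intro hExt
    obtain ⟨l, hl⟩ := LinearMap.exists_leftInverse_of_forall_exists_comp_eq
      ((ModuleCat.isZero_Ext_one_iff_forall_exists_comp_eq ℤ hexact hf hg _).mp hExt)
    exact ⟨s, r, ⟨((hexact.splitInjectiveEquiv hg ⟨l, hl⟩).1.trans
      (LinearEquiv.prodComm A _ _)).symm⟩⟩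
end

section
/- Let A be a ring, K an A-subbimodule of A^t, and consider the A-bimodule A^t/K. For a left A-linear map f_r: A^{s_r} → A^{s_{r-1}} with matrix F_r in the canonical bases, the induced map f_r^*: Hom_A(A^{s_{r-1}}, A^t/K) → Hom_A(A^{s_r}, A^t/K), under the identifications Hom_A(A^{s_j}, A^t/K) ≅ A^{t s_j}/⟨I_{s_j} ⊗ Δ⟩_A (where the columns of Δ generate K as a right A-module), is given by left multiplication by the matrix I_t ⊗ F_r^T. -/
open Kronecker

/-- Let `A` be a ring, `K` an `A`-subbimodule of `A^t` generated as a
right `A`-module by the columns of `Δ ∈ M_{t×t₁}(A)`, and consider the `A`-bimodule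
`A^t/K`.  For a left `A`-linear map `f_r : A^{s_r} → A^{s_{r-1}}` with matrix `F_r` in the
canonical bases (so `f_r(c) k = ∑_{j'} c_{j'} (F_r)_{k j'}`), the induced map
`f_r^* : Hom_A(A^{s_{r-1}}, A^t/K) → Hom_A(A^{s_r}, A^t/K)`, under the identifications
`Hom_A(A^{s_j}, A^t/K) ≅ A^{t s_j}/⟨I_{s_j} ⊗ Δ⟩_A` (a homomorphism `α` corresponding to
any vector `a` with `α(e_k) = [a(·,k)]`), is given by left multiplication by the matrix
`I_t ⊗ F_r^T`: a representative of `f_r^*(α) = α ∘ f_r` is the vector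
`(I_t ⊗ F_r^T) ⬝ a`. -/
theorem dual_map_is_kronecker_mul {A : Type*} [Ring A] {t t₁ sr sr' : ℕ}
    (Δ : Matrix (Fin t) (Fin t₁) A)
    (K : Submodule A (Fin t → A))
    (hK : ∀ v, v ∈ K ↔ ∃ c : Fin t₁ → A, v = fun i => ∑ k, Δ i k * c k)
    (F : Matrix (Fin sr') (Fin sr) A)
    (f : (Fin sr → A) →ₗ[A] (Fin sr' → A))
    (hf : ∀ c k, f c k = ∑ j', c j' * F k j')
    (α : (Fin sr' → A) →ₗ[A] ((Fin t → A) ⧸ K))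
    (a : Fin t × Fin sr' → A)
    (ha : ∀ k, α (Pi.single k 1) = Submodule.Quotient.mk (fun i => a (i, k))) :
    ∀ j' : Fin sr, (α ∘ₗ f) (Pi.single j' 1) =
      Submodule.Quotient.mk
        (fun i => (((1 : Matrix (Fin t) (Fin t) A) ⊗ₖ F.transpose).mulVec a) (i, j')) := by
  intro j'
  have hfe : f (Pi.single j' 1) = ∑ k, (F k j') • (Pi.single k 1 : Fin sr' → A) := by
    funext m
    rw [hf]
    simp [Pi.single_apply]
  rw [LinearMap.comp_apply, hfe, map_sum]
  have key : ∀ k, α ((F k j') • (Pi.single k 1 : Fin sr' → A)) = K.mkQ (fun i => F k j' * a (i,k)) := by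
    intro k
    rw [map_smul, ha]
    rfl
  simp_rw [key, ← map_sum]
  show K.mkQ _ = K.mkQ _
  congr 1
  funext i
  simp [Matrix.mulVec, Matrix.kroneckerMap_apply, Matrix.one_apply, Fintype.sum_prod_type,
    dotProduct, Finset.sum_apply, ite_and, Finset.mul_sum]
end

section
/- Let A be a Noetherian domain and M a finitely presented left A-module. Then M is a torsion module if and only if its dual M* = Hom_A(M, A) is zero. -/
/-!
A torsion element is killed by every functional `f : M → A`, since `a * f x = f (a • x) = 0`
and `A` is a domain. Conversely, a Noetherian domain is a left and right Ore domain, so it has a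
division ring of fractions `Q`, and `x ∈ M` is torsion exactly when its image `x / 1` in the
`Q`-vector space `A⁰⁻¹M` vanishes. If `x` is not torsion, some `Q`-linear functional `g` is
nonzero at `x / 1`. On the finitely many generators of `M` the values of `g` are fractions in `Q`,
which have a common right denominator `t`; then `m ↦ g (m / 1) * t` is a nonzero `A`-valued
functional on `M`.
-/

open nonZeroDivisors

namespace OreLocalization

variable {R : Type*} [Semiring R] (S : Submonoid R) [OreSet S]
  (X : Type*) [AddCommMonoid X] [Module R X]

def mkLinearMap : X →ₗ[R] OreLocalization S X where
  toFun x := x /ₒ 1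
  map_add' _ _ := add_oreDiv.symm
  map_smul' r x := (smul_oreDiv_one r x).symm

variable {S X}

@[simp]
theorem mkLinearMap_apply (x : X) : mkLinearMap S X x = x /ₒ 1 := rfl

theorem oreDiv_one_eq_zero_iff {x : X} : x /ₒ (1 : S) = 0 ↔ ∃ s : S, s • x = 0 := by
  rw [OreLocalization.zero_def, oreDiv_eq_iff]
  constructor
  · rintro ⟨u, v, hx, huv⟩
    simp only [smul_zero, OneMemClass.coe_one, mul_one] at hx huv
    exact ⟨u, by rw [Submonoid.smul_def, huv, hx]⟩
  · rintro ⟨s, hs⟩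
    exact ⟨s, s, by rw [smul_zero, ← Submonoid.smul_def, hs], by simp⟩

section OreDomain

variable {A : Type*} [Ring A] [IsDomain A] [OreSet A⁰]

theorem mkLinearMap_injective : Function.Injective (mkLinearMap A⁰ A) := by
  refine (injective_iff_map_eq_zero _).mpr fun a ha => ?_
  obtain ⟨s, hs⟩ := oreDiv_one_eq_zero_iff.mp ha
  exact (mul_eq_zero.mp hs).resolve_left (nonZeroDivisors.coe_ne_zero s)

variable [OreSet Aᵐᵒᵖ⁰]

/-- The left Ore condition in `Aᵐᵒᵖ` rewrites the left fraction `s⁻¹ r` as a right fraction. -/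
theorem exists_mul_oreDiv_one_eq (q : OreLocalization A⁰ A) :
    ∃ t ∈ A⁰, ∃ b : A, q * (t /ₒ 1) = b /ₒ 1 := by
  induction q using OreLocalization.ind with
  | _ r s =>
  obtain ⟨b, t, hore⟩ := oreCondition (MulOpposite.op r)
    ⟨MulOpposite.op (s : A), mem_nonZeroDivisors_of_ne_zero (by simp)⟩
  refine ⟨(t : Aᵐᵒᵖ).unop, mem_nonZeroDivisors_of_ne_zero (by simp), b.unop, ?_⟩
  have hrs : r * (t : Aᵐᵒᵖ).unop = s * b.unop := congrArg MulOpposite.unop hore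
  rw [mul_div_one, hrs, OreLocalization.expand' b.unop 1 s, mul_one, Submonoid.smul_def,
    smul_eq_mul]

theorem exists_forall_mul_oreDiv_one_mem_range (F : Finset (OreLocalization A⁰ A)) :
    ∃ t ∈ A⁰, ∀ q ∈ F, q * (t /ₒ 1) ∈ LinearMap.range (mkLinearMap A⁰ A) := by
  classical
  induction F using Finset.induction_on with
  | empty => exact ⟨1, one_mem _, by simp⟩
  | insert q₀ F _ ih =>
    obtain ⟨t, ht, hF⟩ := ih
    obtain ⟨u, hu, b, hb⟩ := exists_mul_oreDiv_one_eq (q₀ * (t /ₒ 1))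
    refine ⟨t * u, mul_mem ht hu, fun q hq => ?_⟩
    rw [← mul_div_one, ← mul_assoc]
    rcases Finset.mem_insert.mp hq with rfl | hq
    · exact ⟨b, hb.symm⟩
    · obtain ⟨c, hc⟩ := hF q hq
      exact ⟨c * u, by rw [← hc, mkLinearMap_apply, mkLinearMap_apply, mul_div_one]⟩

end OreDomain

end OreLocalization

open OreLocalization

section OreDomain

variable {A : Type*} [Ring A] [IsDomain A] [OreSet A⁰] [OreSet Aᵐᵒᵖ⁰]
  {M : Type*} [AddCommGroup M] [Module A M] [Module.Finite A M]

theorem LinearMap.exists_oreDiv_one_eq_mul (g : M →ₗ[A] OreLocalization A⁰ A) :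
    ∃ t ∈ A⁰, ∃ φ : M →ₗ[A] A, ∀ m, φ m /ₒ 1 = g m * (t /ₒ 1) := by
  classical
  obtain ⟨G, hG⟩ := Module.Finite.fg_top (R := A) (M := M)
  obtain ⟨t, ht, hGt⟩ := exists_forall_mul_oreDiv_one_mem_range (G.image g)
  let gt := LinearMap.mulRight A (t /ₒ (1 : A⁰)) ∘ₗ g
  have hgt : ⊤ ≤ (LinearMap.range (mkLinearMap A⁰ A)).comap gt :=
    hG ▸ Submodule.span_le.mpr fun m hm => hGt _ (Finset.mem_image_of_mem g hm)
  exact ⟨t, ht, (LinearEquiv.ofInjective _ mkLinearMap_injective).symm.toLinearMap ∘ₗ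
    gt.codRestrict _ fun _ => Submodule.mem_comap.mp (hgt Submodule.mem_top),
    fun _ => LinearEquiv.ofInjective_symm_apply (mkLinearMap A⁰ A) (h := mkLinearMap_injective) _⟩

theorem Module.exists_dual_apply_ne_zero_of_smul_ne_zero {x : M}
    (hx : ∀ a : A, a ≠ 0 → a • x ≠ 0) : ∃ φ : M →ₗ[A] A, φ x ≠ 0 := by
  have hx' : mkLinearMap A⁰ M x ≠ 0 := fun h => by
    obtain ⟨s, hs⟩ := oreDiv_one_eq_zero_iff.mp h
    exact hx s (nonZeroDivisors.coe_ne_zero s) hs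
  obtain ⟨g, hg⟩ := Module.Projective.exists_dual_ne_zero (OreLocalization A⁰ A) hx'
  obtain ⟨t, ht, φ, hφ⟩ := (g.restrictScalars A ∘ₗ mkLinearMap A⁰ M).exists_oreDiv_one_eq_mul
  refine ⟨φ, fun h => mul_ne_zero hg (numerator_isUnit ⟨t, ht⟩).ne_zero ?_⟩
  have hφx := hφ x
  rw [h, zero_oreDiv'] at hφx
  exact hφx.symm

end OreDomain

theorem torsion_iff_dual_eq_zero_general {A : Type*} [Ring A] [IsDomain A]
    [IsNoetherianRing A] [IsNoetherianRing Aᵐᵒᵖ]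
    (M : Type*) [AddCommGroup M] [Module A M]
    {r : ℕ} (π : (Fin r → A) →ₗ[A] M) (hπ : Function.Surjective π) :
    (∀ x : M, ∃ a : A, a ≠ 0 ∧ a • x = 0) ↔ (∀ f : M →ₗ[A] A, f = 0) := by
  refine ⟨fun htors f => LinearMap.ext fun x => ?_, fun hdual x => ?_⟩
  · obtain ⟨a, ha, hax⟩ := htors x
    refine (mul_eq_zero.mp ?_).resolve_left ha
    rw [← smul_eq_mul, ← map_smul, hax, map_zero]
  · obtain ⟨_⟩ := nonempty_oreSet_of_strongRankCondition (R := A)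
    obtain ⟨_⟩ := nonempty_oreSet_of_strongRankCondition (R := Aᵐᵒᵖ)
    have := Module.Finite.of_surjective π hπ
    by_contra! hx
    obtain ⟨φ, hφ⟩ := Module.exists_dual_apply_ne_zero_of_smul_ne_zero hx
    exact hφ (by rw [hdual φ, LinearMap.zero_apply])

/-- Let `A` be a (left and right) Noetherian domain and `M` a finitely
presented left `A`-module (given by a finite presentation `A^s → A^r → M → 0`).  Then `M`
is a torsion module (every element is annihilated by some nonzero element of `A`) if and
only if its dual `M* = Hom_A(M, A)` is zero. -/
theorem torsion_iff_dual_eq_zero {A : Type*} [Ring A] [IsDomain A]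
    [IsNoetherianRing A] [IsNoetherianRing Aᵐᵒᵖ]
    (M : Type*) [AddCommGroup M] [Module A M]
    {s r : ℕ} (f₁ : (Fin s → A) →ₗ[A] (Fin r → A))
    (π : (Fin r → A) →ₗ[A] M) (hπ : Function.Surjective π)
    (hexact : LinearMap.ker π = LinearMap.range f₁) :
    (∀ x : M, ∃ a : A, a ≠ 0 ∧ a • x = 0) ↔ (∀ f : M →ₗ[A] A, f = 0) :=
  torsion_iff_dual_eq_zero_general M π hπ
end
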